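/- Let C = {C_1, ..., C_k} be a d-arrangement of k ≥ 3 curves in ℂP² with t_k = 0 (no point lies on all k curves). Then the Levi graph G of C has an induced cycle of length 6. -/

import Mathlib

open MvPolynomial

/-- The Levi graph of an arrangement of curves `C : ι → Set P` with singular points `S`:
the bipartite incidence graph between singular points and curves. -/
def leviGraph {P ι : Type*} (C : ι → Set P) (S : Finset P) :
    SimpleGraph ({p // p ∈ S} ⊕ ι) :=
  SimpleGraph.fromRel (fun u v => ∃ (p : {p // p ∈ S}) (i : ι),
    u = Sum.inl p ∧ v = Sum.inr i ∧ (p : P) ∈ C i)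

lemma leviGraph_adj_inl_inr {P ι : Type*} (C : ι → Set P) (S : Finset P)
    (p : {p // p ∈ S}) (i : ι) :
    (leviGraph C S).Adj (Sum.inl p) (Sum.inr i) ↔ (p : P) ∈ C i := by
  simp [leviGraph, SimpleGraph.fromRel_adj]

lemma leviGraph_not_adj_inl_inl {P ι : Type*} (C : ι → Set P) (S : Finset P)
    (p q : {p // p ∈ S}) :
    ¬ (leviGraph C S).Adj (Sum.inl p) (Sum.inl q) := by
  simp [leviGraph, SimpleGraph.fromRel_adj]

lemma leviGraph_not_adj_inr_inr {P ι : Type*} (C : ι → Set P) (S : Finset P)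
    (i m : ι) :
    ¬ (leviGraph C S).Adj (Sum.inr i) (Sum.inr m) := by
  simp [leviGraph, SimpleGraph.fromRel_adj]

set_option maxHeartbeats 1000000 in
theorem leviGraph_d_arrangement_induced_C6 {P : Type*} {k d : ℕ}
    (hk : 3 ≤ k) (hd : 1 ≤ d) (C : Fin k → Set P) (S : Finset P)
    (hS : ∀ p : P, p ∈ S ↔ ∃ i j : Fin k, i ≠ j ∧ p ∈ C i ∧ p ∈ C j)
    (hpair : ∀ i j : Fin k, i ≠ j → (C i ∩ C j).ncard = d ^ 2)
    (htk : ∀ p : P, ¬ ∀ i : Fin k, p ∈ C i) :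
    Nonempty (SimpleGraph.cycleGraph 6 ↪g leviGraph C S) := by
  have hdpos : 0 < d ^ 2 := by positivity
  have hfin : ∀ i j : Fin k, i ≠ j → (C i ∩ C j).Finite := by
    intro i j hij
    by_contra h
    have h0 : (C i ∩ C j).ncard = 0 := Set.Infinite.ncard h
    rw [hpair i j hij] at h0
    omega
  have hne : ∀ i j : Fin k, i ≠ j → (C i ∩ C j).Nonempty := by
    intro i j hij
    apply Set.nonempty_of_ncard_ne_zero
    rw [hpair i j hij]; omega
  -- a subset relation between pairwise intersections forces equality
  have hsub : ∀ i j i' j' : Fin k, i ≠ j → i' ≠ j' →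
      C i ∩ C j ⊆ C i' ∩ C j' → C i ∩ C j = C i' ∩ C j' := by
    intro i j i' j' hij hij' hss
    exact Set.eq_of_subset_of_ncard_le hss
      (by rw [hpair i j hij, hpair i' j' hij']) (hfin i' j' hij')
  -- key existence of a good triple
  have key : ∃ i j r : Fin k, i ≠ j ∧ j ≠ r ∧ r ≠ i ∧
      ((C i ∩ C j) \ C r).Nonempty ∧ ((C j ∩ C r) \ C i).Nonempty ∧
      ((C r ∩ C i) \ C j).Nonempty := by
    by_contra hcon
    -- every triple is degenerate; show C 0 ∩ C 1 ⊆ C m for all m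
    have h0 : (0 : ℕ) < k := by omega
    have h1 : (1 : ℕ) < k := by omega
    set a : Fin k := ⟨0, h0⟩
    set b : Fin k := ⟨1, h1⟩
    have hab : a ≠ b := by simp [a, b, Fin.ext_iff]
    have hTm : ∀ m : Fin k, C a ∩ C b ⊆ C m := by
      intro m
      by_cases hma : m = a
      · subst hma; exact Set.inter_subset_left
      by_cases hmb : m = b
      · subst hmb; exact Set.inter_subset_right
      have hbm : b ≠ m := fun h => hmb h.symm
      have hma' : m ≠ a := hma
      rcases Set.eq_empty_or_nonempty ((C a ∩ C b) \ C m) with h | hA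
      · exact Set.diff_eq_empty.mp h
      rcases Set.eq_empty_or_nonempty ((C b ∩ C m) \ C a) with h | hB
      · have h' := Set.diff_eq_empty.mp h
        have hss : C b ∩ C m ⊆ C a ∩ C b := fun x hx => ⟨h' hx, hx.1⟩
        have heq := hsub b m a b hbm hab hss
        rw [← heq]
        exact Set.inter_subset_right
      rcases Set.eq_empty_or_nonempty ((C m ∩ C a) \ C b) with h | hC
      · have h' := Set.diff_eq_empty.mp h
        have hss : C m ∩ C a ⊆ C a ∩ C b := fun x hx => ⟨hx.2, h' hx⟩
        have heq := hsub m a a b (fun h' => hma h') hab hss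
        rw [← heq]
        exact Set.inter_subset_left
      exact (hcon ⟨a, b, m, hab, hbm, hma', hA, hB, hC⟩).elim
    obtain ⟨p, hp⟩ := hne a b hab
    exact htk p (fun m => hTm m hp)
  obtain ⟨i, j, r, hij, hjr, hri, ⟨p1, hp1⟩, ⟨p2, hp2⟩, ⟨p3, hp3⟩⟩ := key
  obtain ⟨⟨hp1i, hp1j⟩, hp1r⟩ := hp1
  obtain ⟨⟨hp2j, hp2r⟩, hp2i⟩ := hp2
  obtain ⟨⟨hp3r, hp3i⟩, hp3j⟩ := hp3
  have hp1S : p1 ∈ S := (hS p1).mpr ⟨i, j, hij, hp1i, hp1j⟩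
  have hp2S : p2 ∈ S := (hS p2).mpr ⟨j, r, hjr, hp2j, hp2r⟩
  have hp3S : p3 ∈ S := (hS p3).mpr ⟨r, i, hri, hp3r, hp3i⟩
  have hp12 : p1 ≠ p2 := fun h => hp1r (h ▸ hp2r)
  have hp23 : p2 ≠ p3 := fun h => hp2i (h ▸ hp3i)
  have hp13 : p1 ≠ p3 := fun h => hp3j (h ▸ hp1j)
  let q1 : {p // p ∈ S} := ⟨p1, hp1S⟩
  let q2 : {p // p ∈ S} := ⟨p2, hp2S⟩
  let q3 : {p // p ∈ S} := ⟨p3, hp3S⟩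
  let f : Fin 6 → ({p // p ∈ S} ⊕ Fin k) :=
    ![Sum.inl q1, Sum.inr j, Sum.inl q2, Sum.inr r, Sum.inl q3, Sum.inr i]
  have hinj : Function.Injective f := by
    intro x y hxy
    fin_cases x <;> fin_cases y <;> dsimp [f] at hxy <;>
      first
        | rfl
        | exact (Sum.inl_ne_inr hxy).elim
        | exact (Sum.inr_ne_inl hxy).elim
        | exact absurd (Subtype.ext_iff.mp (Sum.inl.inj hxy)) hp12
        | exact absurd (Subtype.ext_iff.mp (Sum.inl.inj hxy)).symm hp12
        | exact absurd (Subtype.ext_iff.mp (Sum.inl.inj hxy)) hp23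
        | exact absurd (Subtype.ext_iff.mp (Sum.inl.inj hxy)).symm hp23
        | exact absurd (Subtype.ext_iff.mp (Sum.inl.inj hxy)) hp13
        | exact absurd (Subtype.ext_iff.mp (Sum.inl.inj hxy)).symm hp13
        | exact absurd (Sum.inr.inj hxy) hij
        | exact absurd (Sum.inr.inj hxy).symm hij
        | exact absurd (Sum.inr.inj hxy) hjr
        | exact absurd (Sum.inr.inj hxy).symm hjr
        | exact absurd (Sum.inr.inj hxy) hri
        | exact absurd (Sum.inr.inj hxy).symm hri
  refine ⟨⟨⟨f, hinj⟩, ?_⟩⟩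
  intro x y
  fin_cases x <;> fin_cases y <;>
    first
      | exact iff_of_true ((leviGraph_adj_inl_inr C S _ _).mpr (by assumption)) (by decide)
      | exact iff_of_true (((leviGraph_adj_inl_inr C S _ _).mpr (by assumption)).symm) (by decide)
      | exact iff_of_false (leviGraph_not_adj_inl_inl C S _ _) (by decide)
      | exact iff_of_false (leviGraph_not_adj_inr_inr C S _ _) (by decide)
      | exact iff_of_false
          (fun h => absurd ((leviGraph_adj_inl_inr C S _ _).mp h) (by assumption)) (by decide)
      | exact iff_of_false
          (fun h => absurd ((leviGraph_adj_inl_inr C S _ _).mp h.symm) (by assumption)) (by decide)
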